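/- arXiv:1709.03353 — 4 statements merged into one kernel-verified Lean document; each statement's English description precedes it below -/
import Mathlib

section
/- Let d ≥ 2, let ψ be a unit vector in ℂ^d, and let Ω be a Hermitian operator on ℂ^d with 0 ≤ Ω ≤ I and Ωψ = ψ. Let q denote the supremum of ⟨φ, Ωφ⟩ over unit vectors φ with ⟨ψ, φ⟩ = 0. Then for every ε ∈ (0, 1], the supremum of tr(Ωσ) over all density matrices σ on ℂ^d satisfying ⟨ψ, σψ⟩ ≤ 1 − ε equals (1 − ε) + εq; moreover, if φ* is a unit vector orthogonal to ψ attaining q, then this supremum is attained by the pure state σ = |χ⟩⟨χ| with χ = √(1−ε)·ψ + √ε·φ*. -/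
/-! Since `Ω` is Hermitian and fixes `ψ`, it splits along `ψ` and `ψ⊥`, so by the definition of
`q` and `q ≤ 1` (from `Ω ≤ 1`) we get the operator bound `Ω ≤ q • 1 + (1 - q) |ψ⟩⟨ψ|`. Pairing it
with a density matrix `σ` gives `tr(Ωσ) ≤ q + (1 - q) ⟨ψ, σψ⟩ ≤ (1 - ε) + ε q`. Conversely the pure
state of `χ = √(1 - ε) ψ + √ε φ` is feasible with value `(1 - ε) + ε ⟨φ, Ωφ⟩`, and taking the
supremum over unit `φ ⊥ ψ` gives equality. -/

open Matrix ComplexOrder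

/-- The performance parameter `q(Ω, ψ)`: the supremum of `⟨φ, Ωφ⟩` over unit
vectors `φ` orthogonal to `ψ`. -/
noncomputable def qparam {n : Type*} [Fintype n] [DecidableEq n]
    (Ω : Matrix n n ℂ) (ψ : n → ℂ) : ℝ :=
  sSup {x : ℝ | ∃ φ : n → ℂ, star φ ⬝ᵥ φ = 1 ∧ star ψ ⬝ᵥ φ = 0 ∧
    x = (star φ ⬝ᵥ (Ω *ᵥ φ)).re}

namespace Matrix

variable {n : Type*} [Fintype n]

theorem trace_mul_vecMulVec {R : Type*} [CommSemiring R] (A : Matrix n n R) (x y : n → R) :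
    (A * vecMulVec x y).trace = y ⬝ᵥ (A *ᵥ x) := by
  rw [mul_vecMulVec, trace_vecMulVec, dotProduct_comm]

variable {𝕜 : Type*} [RCLike 𝕜]

theorem PosSemidef.trace_mul_nonneg {A B : Matrix n n 𝕜} (hA : A.PosSemidef)
    (hB : B.PosSemidef) : 0 ≤ (A * B).trace := by
  obtain ⟨m, v, rfl⟩ := posSemidef_iff_eq_sum_vecMulVec.mp hB
  rw [Finset.mul_sum, trace_sum]
  exact Finset.sum_nonneg fun i _ ↦ by
    rw [trace_mul_vecMulVec]; exact hA.dotProduct_mulVec_nonneg (v i)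

theorem IsHermitian.posSemidef_of_re_nonneg {A : Matrix n n 𝕜} (hA : A.IsHermitian)
    (h : ∀ x, 0 ≤ RCLike.re (star x ⬝ᵥ (A *ᵥ x))) : A.PosSemidef :=
  .of_dotProduct_mulVec_nonneg hA fun x ↦
    RCLike.nonneg_iff.mpr ⟨h x, hA.im_star_dotProduct_mulVec_self x⟩

theorem star_ofReal_smul_dotProduct_mulVec (A : Matrix n n 𝕜) (r : ℝ) (x : n → 𝕜) :
    star ((r : 𝕜) • x) ⬝ᵥ (A *ᵥ ((r : 𝕜) • x)) = (r : 𝕜) ^ 2 * (star x ⬝ᵥ (A *ᵥ x)) := by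
  simp only [star_smul, RCLike.star_def, RCLike.conj_ofReal, mulVec_smul, smul_dotProduct,
    dotProduct_smul, smul_eq_mul]
  ring

theorem exists_pos_star_ofReal_smul_dotProduct_eq_one {y : n → 𝕜} (hy : y ≠ 0) :
    ∃ r : ℝ, 0 < r ∧ star ((r : 𝕜) • y) ⬝ᵥ ((r : 𝕜) • y) = 1 := by
  obtain ⟨t, ht, hyt⟩ := RCLike.pos_iff_exists_ofReal.mp (dotProduct_star_self_pos_iff.mpr hy)
  refine ⟨(√t)⁻¹, by positivity, ?_⟩
  have hr : (√t : 𝕜) ≠ 0 := by exact_mod_cast (Real.sqrt_pos.mpr ht).ne'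
  have : (√t : 𝕜) ^ 2 = t := by exact_mod_cast Real.sq_sqrt ht.le
  simp only [star_smul, RCLike.star_def, RCLike.conj_ofReal, smul_dotProduct, dotProduct_smul,
    smul_eq_mul, ← hyt]
  push_cast
  rw [← this]
  field_simp

theorem star_smul_add_dotProduct_mulVec_smul_add {Ω : Matrix n n 𝕜} {ψ y : n → 𝕜}
    (hΩ : Ω.IsHermitian) (hfix : Ω *ᵥ ψ = ψ) (hy : star ψ ⬝ᵥ y = 0) (c : 𝕜) :
    star (c • ψ + y) ⬝ᵥ (Ω *ᵥ (c • ψ + y)) =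
      star c * c * (star ψ ⬝ᵥ ψ) + star y ⬝ᵥ (Ω *ᵥ y) := by
  have hψΩy : star ψ ⬝ᵥ (Ω *ᵥ y) = 0 := by
    rw [dotProduct_mulVec, ← hΩ.eq, ← star_mulVec, hfix, hy]
  have hyψ : star y ⬝ᵥ ψ = 0 := by rw [star_dotProduct, hy, star_zero]
  simp only [star_add, star_smul, mulVec_add, mulVec_smul, hfix, add_dotProduct, dotProduct_add,
    smul_dotProduct, dotProduct_smul, smul_eq_mul, hψΩy, hyψ]
  ring

theorem exists_star_dotProduct_self_eq_one_and_orthogonal [Nontrivial n] (ψ : n → 𝕜) :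
    ∃ φ : n → 𝕜, star φ ⬝ᵥ φ = 1 ∧ star ψ ⬝ᵥ φ = 0 := by
  obtain ⟨y, hy, hyψ⟩ := exists_ne_zero_dotProduct_eq_zero (star ψ)
  obtain ⟨r, -, hr⟩ := exists_pos_star_ofReal_smul_dotProduct_eq_one hy
  exact ⟨_, hr, by rw [dotProduct_smul, dotProduct_comm, hyψ, smul_zero]⟩

theorem star_dotProduct_mulVec_superposition {Ω : Matrix n n 𝕜} {ψ φ : n → 𝕜}
    (hψ : star ψ ⬝ᵥ ψ = 1) (hΩ : Ω.IsHermitian) (hfix : Ω *ᵥ ψ = ψ) (hψφ : star ψ ⬝ᵥ φ = 0)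
    (a b : ℝ) :
    star ((a : 𝕜) • ψ + (b : 𝕜) • φ) ⬝ᵥ (Ω *ᵥ ((a : 𝕜) • ψ + (b : 𝕜) • φ)) =
      (a : 𝕜) ^ 2 + (b : 𝕜) ^ 2 * (star φ ⬝ᵥ (Ω *ᵥ φ)) := by
  rw [star_smul_add_dotProduct_mulVec_smul_add hΩ hfix (by simp [hψφ]),
    star_ofReal_smul_dotProduct_mulVec, hψ, RCLike.star_def, RCLike.conj_ofReal]
  ring

end Matrix

section qparam

variable {n : Type*} [Fintype n] [DecidableEq n] {Ω : Matrix n n ℂ} {ψ : n → ℂ}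

theorem re_star_dotProduct_mulVec_le_one (hΩI : (1 - Ω).PosSemidef) {φ : n → ℂ}
    (hφ : star φ ⬝ᵥ φ = 1) : (star φ ⬝ᵥ (Ω *ᵥ φ)).re ≤ 1 := by
  have := hΩI.re_dotProduct_nonneg φ
  rw [sub_mulVec, one_mulVec, dotProduct_sub, hφ] at this
  simpa using this

theorem qparam_le_one (hΩI : (1 - Ω).PosSemidef) : qparam Ω ψ ≤ 1 :=
  Real.sSup_le (by rintro _ ⟨φ, hφ, -, rfl⟩; exact re_star_dotProduct_mulVec_le_one hΩI hφ)
    zero_le_one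

theorem le_qparam (hΩI : (1 - Ω).PosSemidef) {φ : n → ℂ} (hφ : star φ ⬝ᵥ φ = 1)
    (hψφ : star ψ ⬝ᵥ φ = 0) : (star φ ⬝ᵥ (Ω *ᵥ φ)).re ≤ qparam Ω ψ :=
  le_csSup ⟨1, by rintro _ ⟨φ, hφ, -, rfl⟩; exact re_star_dotProduct_mulVec_le_one hΩI hφ⟩
    ⟨φ, hφ, hψφ, rfl⟩

theorem re_star_dotProduct_mulVec_le_qparam_mul (hΩI : (1 - Ω).PosSemidef) {y : n → ℂ}
    (hy : star ψ ⬝ᵥ y = 0) :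
    (star y ⬝ᵥ (Ω *ᵥ y)).re ≤ qparam Ω ψ * (star y ⬝ᵥ y).re := by
  rcases eq_or_ne y 0 with rfl | hy0
  · simp
  obtain ⟨r, hr, hφ⟩ := exists_pos_star_ofReal_smul_dotProduct_eq_one hy0
  have hq := le_qparam hΩI hφ (by rw [dotProduct_smul, hy, smul_zero])
  have hyy := star_ofReal_smul_dotProduct_mulVec 1 r y
  rw [one_mulVec, one_mulVec, hφ] at hyy
  rw [star_ofReal_smul_dotProduct_mulVec] at hq
  simp only [Complex.coe_algebraMap] at hq hyy
  rw [← Complex.ofReal_pow, Complex.re_ofReal_mul] at hq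
  have hyy_re : 1 = r ^ 2 * (star y ⬝ᵥ y).re := by
    simpa [← Complex.ofReal_pow, Complex.re_ofReal_mul] using congrArg Complex.re hyy
  refine le_of_mul_le_mul_left ?_ (pow_pos hr 2)
  rwa [mul_left_comm, ← hyy_re, mul_one]

theorem posSemidef_qparam_smul_one_add_sub (hψ : star ψ ⬝ᵥ ψ = 1) (hΩ : Ω.IsHermitian)
    (hΩI : (1 - Ω).PosSemidef) (hfix : Ω *ᵥ ψ = ψ) :
    ((qparam Ω ψ : ℂ) • 1 + ((1 - qparam Ω ψ : ℝ) : ℂ) • vecMulVec ψ (star ψ) - Ω).PosSemidef := by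
  refine IsHermitian.posSemidef_of_re_nonneg
    (((isHermitian_one.smul (Complex.conj_ofReal _)).add
      ((posSemidef_vecMulVec_self_star ψ).isHermitian.smul (Complex.conj_ofReal _))).sub hΩ)
    fun x ↦ ?_
  obtain ⟨c, y, hy, rfl⟩ : ∃ c y, star ψ ⬝ᵥ y = 0 ∧ x = c • ψ + y :=
    ⟨star ψ ⬝ᵥ x, x - (star ψ ⬝ᵥ x) • ψ, by simp [dotProduct_sub, hψ], by abel⟩
  have hnorm := star_smul_add_dotProduct_mulVec_smul_add isHermitian_one (one_mulVec ψ) hy c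
  have hΩx := star_smul_add_dotProduct_mulVec_smul_add hΩ hfix hy c
  have hPx : vecMulVec ψ (star ψ) *ᵥ (c • ψ + y) = c • ψ := by
    simp [vecMulVec_mulVec, hψ, hy]
  have hyψ : star y ⬝ᵥ ψ = 0 := by rw [star_dotProduct, hy, star_zero]
  simp only [one_mulVec] at hnorm
  have hquad : star (c • ψ + y) ⬝ᵥ ((qparam Ω ψ : ℂ) • 1 + ((1 - qparam Ω ψ : ℝ) : ℂ) •
      vecMulVec ψ (star ψ) - Ω) *ᵥ (c • ψ + y) =
      (qparam Ω ψ : ℂ) * (star y ⬝ᵥ y) - star y ⬝ᵥ (Ω *ᵥ y) := by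
    simp only [add_mulVec, sub_mulVec, smul_mulVec, one_mulVec, dotProduct_add, dotProduct_sub,
      dotProduct_smul, hnorm, hΩx, hPx]
    simp only [star_add, star_smul, add_dotProduct, smul_dotProduct, hψ, hyψ, smul_eq_mul]
    push_cast
    ring
  rw [hquad]
  simpa using re_star_dotProduct_mulVec_le_qparam_mul hΩI hy

theorem re_trace_mul_le_qparam_add (hψ : star ψ ⬝ᵥ ψ = 1) (hΩ : Ω.IsHermitian)
    (hΩI : (1 - Ω).PosSemidef) (hfix : Ω *ᵥ ψ = ψ) {σ : Matrix n n ℂ} (hσ : σ.PosSemidef)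
    (hσtr : σ.trace = 1) :
    (Ω * σ).trace.re ≤ qparam Ω ψ + (1 - qparam Ω ψ) * (star ψ ⬝ᵥ (σ *ᵥ ψ)).re := by
  have h := (posSemidef_qparam_smul_one_add_sub hψ hΩ hΩI hfix).trace_mul_nonneg hσ
  rw [sub_mul, add_mul, smul_mul, smul_mul, one_mul, trace_sub, trace_add, trace_smul,
    trace_smul, hσtr, trace_mul_comm (vecMulVec _ _), trace_mul_vecMulVec] at h
  have := (Complex.le_def.mp h).1
  simp only [smul_eq_mul, mul_one, Complex.sub_re, Complex.add_re, Complex.re_ofReal_mul,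
    Complex.ofReal_re, Complex.zero_re, sub_nonneg] at this
  linarith

end qparam

theorem superposition_spec {n : Type*} [Fintype n] [DecidableEq n] {Ω : Matrix n n ℂ}
    {ψ φ χ : n → ℂ} (hψ : star ψ ⬝ᵥ ψ = 1) (hΩ : Ω.IsHermitian) (hfix : Ω *ᵥ ψ = ψ)
    (hφ : star φ ⬝ᵥ φ = 1) (hψφ : star ψ ⬝ᵥ φ = 0) {ε : ℝ} (hε0 : 0 ≤ ε) (hε1 : ε ≤ 1)
    (hχ : χ = (Real.sqrt (1 - ε) : ℂ) • ψ + (Real.sqrt ε : ℂ) • φ) :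
    (vecMulVec χ (star χ)).PosSemidef ∧ (vecMulVec χ (star χ)).trace = 1 ∧
    (star ψ ⬝ᵥ (vecMulVec χ (star χ) *ᵥ ψ)).re = 1 - ε ∧
    (Ω * vecMulVec χ (star χ)).trace.re = (1 - ε) + ε * (star φ ⬝ᵥ (Ω *ᵥ φ)).re := by
  have ha : ((√(1 - ε) : ℝ) : ℂ) ^ 2 = ((1 - ε : ℝ) : ℂ) := by
    exact_mod_cast Real.sq_sqrt (sub_nonneg.mpr hε1)
  have hb : ((√ε : ℝ) : ℂ) ^ 2 = (ε : ℂ) := by exact_mod_cast Real.sq_sqrt hε0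
  have hχχ := star_dotProduct_mulVec_superposition (𝕜 := ℂ) hψ isHermitian_one
    (one_mulVec ψ) hψφ (√(1 - ε)) √ε
  have hΩχ := star_dotProduct_mulVec_superposition (𝕜 := ℂ) hψ hΩ hfix hψφ (√(1 - ε)) √ε
  simp only [Complex.coe_algebraMap, ← hχ, ha, hb, one_mulVec, hφ] at hχχ hΩχ
  have hψχ : star ψ ⬝ᵥ χ = (√(1 - ε) : ℝ) := by simp [hχ, hψ, hψφ]
  refine ⟨posSemidef_vecMulVec_self_star χ, ?_, ?_, ?_⟩
  · rw [trace_vecMulVec, dotProduct_comm, hχχ]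
    push_cast
    ring
  · simp only [vecMulVec_mulVec, dotProduct_smul, star_dotProduct χ ψ, hψχ, op_smul_eq_mul,
      Complex.star_def, Complex.conj_ofReal, ← sq, ha, Complex.ofReal_re]
  · rw [trace_mul_vecMulVec, hΩχ]
    simp

theorem csSup_eq_add_mul_csSup {S Q : Set ℝ} {a ε : ℝ} (hε : 0 < ε) (hQ : Q.Nonempty)
    (hQS : ∀ x ∈ Q, a + ε * x ∈ S) (hS : ∀ s ∈ S, s ≤ a + ε * sSup Q) :
    sSup S = a + ε * sSup Q := by
  refine IsLUB.csSup_eq ⟨hS, fun b hb ↦ ?_⟩ ⟨_, hQS _ hQ.some_mem⟩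
  have : sSup Q ≤ (b - a) / ε :=
    csSup_le hQ fun x hx ↦ (le_div_iff₀ hε).mpr (by linarith [hb (hQS x hx)])
  rw [le_div_iff₀ hε] at this
  linarith

theorem stmt_0 (d : ℕ) (hd : 2 ≤ d)
    (ψ : Fin d → ℂ) (hψ : star ψ ⬝ᵥ ψ = 1)
    (Ω : Matrix (Fin d) (Fin d) ℂ)
    (hΩ : Ω.PosSemidef) (hΩI : ((1 : Matrix (Fin d) (Fin d) ℂ) - Ω).PosSemidef)
    (hfix : Ω *ᵥ ψ = ψ)
    (ε : ℝ) (hε : 0 < ε) (hε1 : ε ≤ 1) :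
    sSup {x : ℝ | ∃ σ : Matrix (Fin d) (Fin d) ℂ, σ.PosSemidef ∧ σ.trace = 1 ∧
        (star ψ ⬝ᵥ (σ *ᵥ ψ)).re ≤ 1 - ε ∧ x = (Ω * σ).trace.re}
      = (1 - ε) + ε * qparam Ω ψ ∧
    ∀ φs : Fin d → ℂ, star φs ⬝ᵥ φs = 1 → star ψ ⬝ᵥ φs = 0 →
      (star φs ⬝ᵥ (Ω *ᵥ φs)).re = qparam Ω ψ →
      ∀ χ : Fin d → ℂ,
        χ = (Real.sqrt (1 - ε) : ℂ) • ψ + (Real.sqrt ε : ℂ) • φs →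
        (vecMulVec χ (star χ)).PosSemidef ∧ (vecMulVec χ (star χ)).trace = 1 ∧
        (star ψ ⬝ᵥ (vecMulVec χ (star χ) *ᵥ ψ)).re ≤ 1 - ε ∧
        (Ω * vecMulVec χ (star χ)).trace.re = (1 - ε) + ε * qparam Ω ψ := by
  have : Nontrivial (Fin d) := Fin.nontrivial_iff_two_le.mpr hd
  obtain ⟨φ₀, hφ₀, hψφ₀⟩ := exists_star_dotProduct_self_eq_one_and_orthogonal ψ
  refine ⟨csSup_eq_add_mul_csSup hε ⟨_, φ₀, hφ₀, hψφ₀, rfl⟩ ?_ ?_, fun φ hφ hψφ hq χ hχ ↦ ?_⟩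
  · rintro _ ⟨φ, hφ, hψφ, rfl⟩
    obtain ⟨hpsd, htr, hψσ, hΩσ⟩ := superposition_spec hψ hΩ.isHermitian hfix hφ hψφ hε.le hε1 rfl
    exact ⟨_, hpsd, htr, hψσ.le, hΩσ.symm⟩
  · rintro _ ⟨σ, hσ, hσtr, hσψ, rfl⟩
    show (Ω * σ).trace.re ≤ 1 - ε + ε * qparam Ω ψ
    have := re_trace_mul_le_qparam_add hψ hΩ.isHermitian hΩI hfix hσ hσtr
    linarith [mul_le_mul_of_nonneg_left hσψ (sub_nonneg.mpr (qparam_le_one (ψ := ψ) hΩI))]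
  · obtain ⟨hpsd, htr, hψσ, hΩσ⟩ := superposition_spec hψ hΩ.isHermitian hfix hφ hψφ hε.le hε1 hχ
    exact ⟨hpsd, htr, hψσ.le, hq ▸ hΩσ⟩
end

section
/- Let Ω_Bell = (1/3)·[(I₄ + X⊗X)/2 + (I₄ − Y⊗Y)/2 + (I₄ + Z⊗Z)/2] on ℂ⁴ and |Φ⁺⟩ = (|00⟩ + |11⟩)/√2. Then Ω_Bell|Φ⁺⟩ = |Φ⁺⟩, and the supremum of ⟨φ, Ω_Bell φ⟩ over unit vectors φ orthogonal to |Φ⁺⟩ equals 1/3. Consequently, for this strategy the minimum failure-detection probability is Δ_ε = (2/3)ε: for every density matrix σ with ⟨Φ⁺, σΦ⁺⟩ ≤ 1 − ε (ε ∈ (0,1]), tr(Ω_Bell σ) ≤ 1 − (2/3)ε, with equality attainable. -/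
open Matrix Kronecker ComplexOrder

/-- Pauli X. -/
def pauliX : Matrix (Fin 2) (Fin 2) ℂ := !![0, 1; 1, 0]

/-- Pauli Y. -/
def pauliY : Matrix (Fin 2) (Fin 2) ℂ := !![0, -Complex.I; Complex.I, 0]

/-- Pauli Z. -/
def pauliZ : Matrix (Fin 2) (Fin 2) ℂ := !![1, 0; 0, -1]

/-- The Bell state `|Φ⁺⟩ = (|00⟩ + |11⟩)/√2` in `ℂ²⊗ℂ²`. -/
noncomputable def bell : Fin 2 × Fin 2 → ℂ :=
  fun p => if p.1 = p.2 then ((1 / Real.sqrt 2 : ℝ) : ℂ) else 0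

/-- The Bell-state verification strategy: uniform mixture of the projectors onto the
positive eigenspaces of `XX`, `−YY` and `ZZ`. -/
noncomputable def ΩBell : Matrix (Fin 2 × Fin 2) (Fin 2 × Fin 2) ℂ :=
  (1/3 : ℂ) • ((1/2 : ℂ) • ((1 : Matrix (Fin 2 × Fin 2) (Fin 2 × Fin 2) ℂ) + pauliX ⊗ₖ pauliX)
    + (1/2 : ℂ) • ((1 : Matrix (Fin 2 × Fin 2) (Fin 2 × Fin 2) ℂ) - pauliY ⊗ₖ pauliY)
    + (1/2 : ℂ) • ((1 : Matrix (Fin 2 × Fin 2) (Fin 2 × Fin 2) ℂ) + pauliZ ⊗ₖ pauliZ))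

/-! The three stabilizer tests `XX`, `−YY`, `ZZ` all accept `|Φ⁺⟩`, and on the orthogonal
complement of `|Φ⁺⟩` their projectors sum to the identity, so `Ω_Bell = (2/3)|Φ⁺⟩⟨Φ⁺| + (1/3) I`.
For such an operator the acceptance probability of a state `σ` is affine in its fidelity
`F = ⟨Φ⁺|σ|Φ⁺⟩`, namely `tr(Ω_Bell σ) = (2/3) F + 1/3`, and the bound is attained by mixing `|Φ⁺⟩`
with any state orthogonal to it. -/

section RankOnePlusScalar

variable {R n : Type*} [CommSemiring R] [Star R] [Fintype n] [DecidableEq n] {ψ : n → R}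

lemma rankOne_add_scalar_mulVec_self (hψ : star ψ ⬝ᵥ ψ = 1) (a b : R) :
    (a • vecMulVec ψ (star ψ) + b • 1) *ᵥ ψ = (a + b) • ψ := by
  rw [add_mulVec, smul_mulVec, smul_mulVec, one_mulVec, vecMulVec_mulVec, hψ, MulOpposite.op_one,
    one_smul, add_smul]

lemma dotProduct_rankOne_add_scalar_mulVec_of_orthogonal {φ : n → R}
    (hφ : star ψ ⬝ᵥ φ = 0) (a b : R) :
    star φ ⬝ᵥ ((a • vecMulVec ψ (star ψ) + b • 1) *ᵥ φ) = b * (star φ ⬝ᵥ φ) := by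
  rw [add_mulVec, smul_mulVec, smul_mulVec, one_mulVec, vecMulVec_mulVec, hφ, MulOpposite.op_zero,
    zero_smul, smul_zero, zero_add, dotProduct_smul, smul_eq_mul]

lemma trace_rankOne_add_scalar_mul (a b : R) (σ : Matrix n n R) :
    ((a • vecMulVec ψ (star ψ) + b • 1) * σ).trace
      = a * (star ψ ⬝ᵥ (σ *ᵥ ψ)) + b * σ.trace := by
  rw [add_mul, smul_mul_assoc, smul_mul_assoc, one_mul, trace_add, trace_smul, trace_smul,
    vecMulVec_mul, trace_vecMulVec, dotProduct_comm, ← dotProduct_mulVec, smul_eq_mul,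
    smul_eq_mul]

end RankOnePlusScalar

lemma qparam_eq_of_forall_eq {n : Type*} [Fintype n] [DecidableEq n]
    {Ω : Matrix n n ℂ} {ψ : n → ℂ} {c : ℝ}
    (hc : ∀ φ : n → ℂ, star φ ⬝ᵥ φ = 1 → star ψ ⬝ᵥ φ = 0 → (star φ ⬝ᵥ (Ω *ᵥ φ)).re = c)
    (hex : ∃ φ : n → ℂ, star φ ⬝ᵥ φ = 1 ∧ star ψ ⬝ᵥ φ = 0) :
    qparam Ω ψ = c := by
  suffices h : {x : ℝ | ∃ φ : n → ℂ, star φ ⬝ᵥ φ = 1 ∧ star ψ ⬝ᵥ φ = 0 ∧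
      x = (star φ ⬝ᵥ (Ω *ᵥ φ)).re} = {c} by
    rw [qparam, h, csSup_singleton]
  ext x
  constructor
  · rintro ⟨φ, h1, h2, rfl⟩
    exact hc φ h1 h2
  · rintro rfl
    obtain ⟨φ, h1, h2⟩ := hex
    exact ⟨φ, h1, h2, (hc φ h1 h2).symm⟩

lemma exists_density_dotProduct_mulVec_eq {n : Type*} [Fintype n] {ψ φ : n → ℂ}
    (hψ : star ψ ⬝ᵥ ψ = 1) (hφ : star φ ⬝ᵥ φ = 1) (hψφ : star ψ ⬝ᵥ φ = 0)
    {t : ℝ} (ht₀ : 0 ≤ t) (ht₁ : t ≤ 1) :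
    ∃ σ : Matrix n n ℂ, σ.PosSemidef ∧ σ.trace = 1 ∧
      star ψ ⬝ᵥ (σ *ᵥ ψ) = ((1 - t : ℝ) : ℂ) := by
  refine ⟨((1 - t : ℝ) : ℂ) • vecMulVec ψ (star ψ) + (t : ℂ) • vecMulVec φ (star φ), ?_, ?_, ?_⟩
  · exact ((posSemidef_vecMulVec_self_star ψ).smul (by exact_mod_cast sub_nonneg.2 ht₁)).add
      ((posSemidef_vecMulVec_self_star φ).smul (by exact_mod_cast ht₀))
  · rw [trace_add, trace_smul, trace_smul, trace_vecMulVec, trace_vecMulVec, dotProduct_comm,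
      hψ, dotProduct_comm, hφ]
    simp
  · have hφψ : star φ ⬝ᵥ ψ = 0 := by rw [star_dotProduct, hψφ, star_zero]
    rw [add_mulVec, smul_mulVec, smul_mulVec, vecMulVec_mulVec, vecMulVec_mulVec, hψ, hφψ]
    simp [hψ]

lemma bell_dotProduct_self : star bell ⬝ᵥ bell = 1 := by
  have h : ((√2 : ℝ) : ℂ)⁻¹ * ((√2 : ℝ) : ℂ)⁻¹ = 1 / 2 := by
    rw [← mul_inv, ← Complex.ofReal_mul, Real.mul_self_sqrt zero_le_two]; norm_num
  simp [dotProduct, bell, Fintype.sum_prod_type, Complex.conj_ofReal, h]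

lemma exists_unit_orthogonal_bell :
    ∃ φ : Fin 2 × Fin 2 → ℂ, star φ ⬝ᵥ φ = 1 ∧ star bell ⬝ᵥ φ = 0 :=
  ⟨Pi.single (0, 1) 1, by simp, by simp [bell]⟩

lemma ΩBell_eq :
    ΩBell = ((2/3 : ℝ) : ℂ) • vecMulVec bell (star bell) + ((1/3 : ℝ) : ℂ) • 1 := by
  ext ⟨i, j⟩ ⟨k, l⟩
  fin_cases i <;> fin_cases j <;> fin_cases k <;> fin_cases l <;>
    simp [ΩBell, pauliX, pauliY, pauliZ, bell, vecMulVec_apply, kroneckerMap_apply, Prod.ext_iff,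
      Complex.ext_iff] <;>
    norm_num [div_mul_div_comm, Real.mul_self_sqrt]

lemma ΩBell_mulVec_bell : ΩBell *ᵥ bell = bell := by
  rw [ΩBell_eq, rankOne_add_scalar_mulVec_self bell_dotProduct_self]
  norm_num

lemma qparam_ΩBell : qparam ΩBell bell = 1/3 := by
  refine qparam_eq_of_forall_eq (fun φ hφ hφψ => ?_) exists_unit_orthogonal_bell
  rw [ΩBell_eq, dotProduct_rankOne_add_scalar_mulVec_of_orthogonal hφψ, hφ]
  norm_num

lemma re_trace_ΩBell_mul {σ : Matrix (Fin 2 × Fin 2) (Fin 2 × Fin 2) ℂ} (hσ : σ.trace = 1) :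
    (ΩBell * σ).trace.re = 2/3 * (star bell ⬝ᵥ (σ *ᵥ bell)).re + 1/3 := by
  rw [ΩBell_eq, trace_rankOne_add_scalar_mul, hσ]
  simp

theorem stmt_4 :
    ΩBell *ᵥ bell = bell ∧
    qparam ΩBell bell = 1/3 ∧
    ∀ ε : ℝ, 0 < ε → ε ≤ 1 →
      (∀ σ : Matrix (Fin 2 × Fin 2) (Fin 2 × Fin 2) ℂ, σ.PosSemidef → σ.trace = 1 →
        (star bell ⬝ᵥ (σ *ᵥ bell)).re ≤ 1 - ε →
        (ΩBell * σ).trace.re ≤ 1 - (2/3) * ε) ∧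
      (∃ σ : Matrix (Fin 2 × Fin 2) (Fin 2 × Fin 2) ℂ, σ.PosSemidef ∧ σ.trace = 1 ∧
        (star bell ⬝ᵥ (σ *ᵥ bell)).re ≤ 1 - ε ∧
        (ΩBell * σ).trace.re = 1 - (2/3) * ε) := by
  refine ⟨ΩBell_mulVec_bell, qparam_ΩBell, fun ε hε hε₁ => ⟨?_, ?_⟩⟩
  · intro σ _ hσ hfid
    rw [re_trace_ΩBell_mul hσ]
    linarith
  · obtain ⟨φ, hφ, hφψ⟩ := exists_unit_orthogonal_bell
    obtain ⟨σ, hσ, htr, hfid⟩ :=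
      exists_density_dotProduct_mulVec_eq bell_dotProduct_self hφ hφψ hε.le hε₁
    refine ⟨σ, hσ, htr, by rw [hfid, Complex.ofReal_re], ?_⟩
    rw [re_trace_ΩBell_mul htr, hfid, Complex.ofReal_re]
    ring
end

section
/- Let θ ∈ (0, π/2) with θ ≠ π/4, and let ψ_θ = sin θ·|00⟩ + cos θ·|11⟩. Let ρ and σ be rank-one orthogonal projections on ℂ² (pure single-qubit states), and set ρ⊥ = I₂ − ρ, σ⊥ = I₂ − σ. If ⟨ψ_θ, (ρ⊗σ + ρ⊥⊗σ⊥)ψ_θ⟩ = 1, then ρ⊗σ + ρ⊥⊗σ⊥ = (I₄ + Z⊗Z)/2, i.e., the only parity-check term of this form accepting ψ_θ with certainty is the projector onto the positive eigenspace of Z⊗Z. -/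
open Matrix Kronecker

/-- The state `ψ_θ = sin θ·|00⟩ + cos θ·|11⟩` in `ℂ²⊗ℂ²`. -/
noncomputable def psiTheta (θ : ℝ) : Fin 2 × Fin 2 → ℂ :=
  fun p => if p = (0, 0) then (Real.sin θ : ℂ)
    else if p = (1, 1) then (Real.cos θ : ℂ) else 0

lemma final_aux0 :
    (!![(0:ℂ),0;0,1]) ⊗ₖ (!![(0:ℂ),0;0,1]) + (1 - !![(0:ℂ),0;0,1]) ⊗ₖ (1 - !![(0:ℂ),0;0,1])
      = (1/2:ℂ) • ((1 : Matrix (Fin 2 × Fin 2) (Fin 2 × Fin 2) ℂ) + pauliZ ⊗ₖ pauliZ) := by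
  ext ⟨i, k⟩ ⟨j, l⟩
  fin_cases i <;> fin_cases k <;> fin_cases j <;> fin_cases l <;>
    norm_num [Matrix.kroneckerMap_apply, Matrix.one_apply, pauliZ, Prod.ext_iff]

lemma final_aux1 :
    (!![(1:ℂ),0;0,0]) ⊗ₖ (!![(1:ℂ),0;0,0]) + (1 - !![(1:ℂ),0;0,0]) ⊗ₖ (1 - !![(1:ℂ),0;0,0])
      = (1/2:ℂ) • ((1 : Matrix (Fin 2 × Fin 2) (Fin 2 × Fin 2) ℂ) + pauliZ ⊗ₖ pauliZ) := by
  ext ⟨i, k⟩ ⟨j, l⟩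
  fin_cases i <;> fin_cases k <;> fin_cases j <;> fin_cases l <;>
    norm_num [Matrix.kroneckerMap_apply, Matrix.one_apply, pauliZ, Prod.ext_iff]

set_option maxHeartbeats 1600000 in
theorem stmt_8 (θ : ℝ) (hθ : θ ∈ Set.Ioo 0 (Real.pi / 2)) (hθ4 : θ ≠ Real.pi / 4)
    (ρ σ : Matrix (Fin 2) (Fin 2) ℂ)
    (hρH : ρ.IsHermitian) (hρ2 : ρ * ρ = ρ) (hρtr : ρ.trace = 1)
    (hσH : σ.IsHermitian) (hσ2 : σ * σ = σ) (hσtr : σ.trace = 1)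
    (hacc : star (psiTheta θ) ⬝ᵥ
      ((ρ ⊗ₖ σ + ((1 : Matrix (Fin 2) (Fin 2) ℂ) - ρ) ⊗ₖ ((1 : Matrix (Fin 2) (Fin 2) ℂ) - σ))
        *ᵥ psiTheta θ) = 1) :
    ρ ⊗ₖ σ + ((1 : Matrix (Fin 2) (Fin 2) ℂ) - ρ) ⊗ₖ ((1 : Matrix (Fin 2) (Fin 2) ℂ) - σ)
      = (1/2 : ℂ) • ((1 : Matrix (Fin 2 × Fin 2) (Fin 2 × Fin 2) ℂ) + pauliZ ⊗ₖ pauliZ) := by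
  obtain ⟨hθ0, hθ2⟩ := hθ
  have hπ := Real.pi_pos
  -- trig facts
  have hs0 : 0 < Real.sin θ := Real.sin_pos_of_pos_of_lt_pi hθ0 (by linarith)
  have hc0 : 0 < Real.cos θ := Real.cos_pos_of_mem_Ioo ⟨by linarith, hθ2⟩
  have hsc2 : Real.sin θ ^ 2 + Real.cos θ ^ 2 = 1 := Real.sin_sq_add_cos_sq θ
  have hne : Real.sin θ ≠ Real.cos θ := by
    intro h
    apply hθ4
    have h1 : Real.sin θ = Real.sin (Real.pi/2 - θ) := by
      rw [Real.sin_pi_div_two_sub]; exact h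
    have := Real.injOn_sin ⟨by linarith, by linarith⟩ ⟨by linarith, by linarith⟩ h1
    linarith
  have hscd : 0 < (Real.sin θ - Real.cos θ)^2 := by
    have : Real.sin θ - Real.cos θ ≠ 0 := sub_ne_zero.mpr hne
    positivity
  have hscpos : 0 < Real.sin θ * Real.cos θ := mul_pos hs0 hc0
  have hsc1 : (2 * Real.sin θ * Real.cos θ)^2 < 1 := by nlinarith [hscd, hsc2, hscpos]
  -- entries of ρ
  set a : ℝ := (ρ 0 0).re with ha_def
  have ha : ρ 0 0 = (a:ℂ) := (Complex.conj_eq_iff_re.mp (hρH.apply 0 0)).symm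
  have ha1 : ρ 1 1 = 1 - (a:ℂ) := by
    have := Matrix.trace_fin_two ρ
    rw [hρtr, ha] at this
    linear_combination -this
  have hq : ρ 1 0 = starRingEnd ℂ (ρ 0 1) := (hρH.apply 1 0).symm
  set b : ℝ := (σ 0 0).re with hb_def
  have hb : σ 0 0 = (b:ℂ) := (Complex.conj_eq_iff_re.mp (hσH.apply 0 0)).symm
  have hb1 : σ 1 1 = 1 - (b:ℂ) := by
    have := Matrix.trace_fin_two σ
    rw [hσtr, hb] at this
    linear_combination -this
  have hr : σ 1 0 = starRingEnd ℂ (σ 0 1) := (hσH.apply 1 0).symm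
  -- idempotency gives |q|² = a - a²
  have hmulρ : (ρ * ρ) 0 0 = ρ 0 0 := by rw [hρ2]
  rw [Matrix.mul_apply, Fin.sum_univ_two, ha, hq] at hmulρ
  have hnq : (ρ 0 1).re^2 + (ρ 0 1).im^2 = a - a^2 := by
    have h3 := congrArg Complex.re hmulρ
    simp only [Complex.add_re, Complex.mul_re, Complex.ofReal_re, Complex.ofReal_im,
      Complex.conj_re, Complex.conj_im] at h3
    nlinarith [h3]
  have hmulσ : (σ * σ) 0 0 = σ 0 0 := by rw [hσ2]
  rw [Matrix.mul_apply, Fin.sum_univ_two, hb, hr] at hmulσ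
  have hnr : (σ 0 1).re^2 + (σ 0 1).im^2 = b - b^2 := by
    have h3 := congrArg Complex.re hmulσ
    simp only [Complex.add_re, Complex.mul_re, Complex.ofReal_re, Complex.ofReal_im,
      Complex.conj_re, Complex.conj_im] at h3
    nlinarith [h3]
  -- expand the acceptance condition
  simp only [dotProduct, mulVec, Fintype.sum_prod_type, Fin.sum_univ_two, psiTheta,
    Matrix.add_apply, Matrix.kroneckerMap_apply, Matrix.sub_apply, Matrix.one_apply,
    Pi.star_apply] at hacc
  norm_num [ha, hb, ha1, hb1, hq, hr] at hacc
  rw [← Complex.ofReal_sin, ← Complex.ofReal_cos] at hacc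
  simp only [Complex.conj_ofReal] at hacc
  rw [Complex.ext_iff] at hacc
  obtain ⟨hre, -⟩ := hacc
  simp only [Complex.add_re, Complex.mul_re, Complex.sub_re, Complex.sub_im, Complex.add_im,
    Complex.mul_im, Complex.ofReal_re, Complex.ofReal_im, Complex.one_re, Complex.one_im,
    RCLike.star_def, Complex.conj_re, Complex.conj_im] at hre
  ring_nf at hre
  -- abbreviations
  set u := (ρ 0 1).re with hu_def
  set v := (ρ 0 1).im with hv_def
  set w := (σ 0 1).re with hw_def
  set z := (σ 0 1).im with hz_def
  set s := Real.sin θ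
  set c := Real.cos θ
  -- clean scalar equation : A + 4sc·x = 1
  have hD : a + b - 2*a*b = 4*s*c*(u*w - v*z) := by
    linear_combination -hre + (1 - (a + b - 2*a*b))*hsc2
  have hx2 : (u*w - v*z)^2 ≤ (a - a^2) * (b - b^2) := by
    nlinarith [sq_nonneg (u*z + v*w), hnq, hnr, sq_nonneg u, sq_nonneg v, sq_nonneg w, sq_nonneg z]
  have haI : 0 ≤ a - a^2 := by nlinarith [sq_nonneg u, sq_nonneg v]
  have hbI : 0 ≤ b - b^2 := by nlinarith [sq_nonneg w, sq_nonneg z]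
  have hx0 : u*w - v*z = 0 := by
    by_contra hx
    have hxp : 0 < (u*w - v*z)^2 := by positivity
    have hE : 16*s^2*c^2*(u*w-v*z)^2 = (a-b)^2 + 4*((a - a^2)*(b - b^2)) := by
      linear_combination -(a + b - 2*a*b + 4*s*c*(u*w - v*z)) * hD
    nlinarith [hE, hx2, hsc1, hxp]
  have hD0 : a + b - 2*a*b = 0 := by rw [hD, hx0]; ring
  have hab : (a = 0 ∧ b = 0) ∨ (a = 1 ∧ b = 1) := by
    have h1 : a * (1-b) = 0 := by nlinarith [haI, hbI, hD0]
    have h2 : b * (1-a) = 0 := by nlinarith [haI, hbI, hD0]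
    rcases mul_eq_zero.mp h1 with h | h
    · left
      refine ⟨h, ?_⟩
      rw [h] at h2
      norm_num at h2
      exact h2
    · right
      have hb' : b = 1 := by linarith
      rw [hb'] at h2
      norm_num at h2
      exact ⟨by linarith, hb'⟩
  -- off-diagonals vanish
  have hq0 : ρ 0 1 = 0 := by
    have huv : u^2 + v^2 = 0 := by
      rcases hab with ⟨h1, _⟩ | ⟨h1, _⟩ <;> rw [h1] at hnq <;> linarith
    apply Complex.ext <;>
      simp only [Complex.zero_re, Complex.zero_im, ← hu_def, ← hv_def] <;>
      nlinarith [sq_nonneg u, sq_nonneg v, huv]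
  have hr0 : σ 0 1 = 0 := by
    have hwz : w^2 + z^2 = 0 := by
      rcases hab with ⟨_, h1⟩ | ⟨_, h1⟩ <;> rw [h1] at hnr <;> linarith
    apply Complex.ext <;>
      simp only [Complex.zero_re, Complex.zero_im, ← hw_def, ← hz_def] <;>
      nlinarith [sq_nonneg w, sq_nonneg z, hwz]
  have hq0' : ρ 1 0 = 0 := by rw [hq, hq0]; simp
  have hr0' : σ 1 0 = 0 := by rw [hr, hr0]; simp
  rcases hab with ⟨h1, h2⟩ | ⟨h1, h2⟩
  · have hρeq : ρ = !![(0:ℂ),0;0,1] := by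
      ext i j
      fin_cases i <;> fin_cases j <;> simp [ha, ha1, hq0, hq0', h1]
    have hσeq : σ = !![(0:ℂ),0;0,1] := by
      ext i j
      fin_cases i <;> fin_cases j <;> simp [hb, hb1, hr0, hr0', h2]
    rw [hρeq, hσeq]
    exact final_aux0
  · have hρeq : ρ = !![(1:ℂ),0;0,0] := by
      ext i j
      fin_cases i <;> fin_cases j <;> simp [ha, ha1, hq0, hq0', h1]
    have hσeq : σ = !![(1:ℂ),0;0,0] := by
      ext i j
      fin_cases i <;> fin_cases j <;> simp [hb, hb1, hr0, hr0', h2]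
    rw [hρeq, hσeq]
    exact final_aux1
end

section
/- For T > 0, define λ₁(α, P) = 1 − P(1−α)(1+T)/((1+P)(P+T)) and λ₂(α, P) = (1−α)·[1 − (T+P²)/(2(1+P)(P+T))]. Then the infimum over α ∈ [0, 1] and P ∈ (0, ∞) of max{λ₁(α,P), λ₂(α,P)} equals (2+s)/(4+s), where s = 2√T/(1+T); the infimum is attained at P = √T and α = (2−s)/(4+s). Equivalently, with T = tan²θ, the optimal value is (2 + sin 2θ)/(4 + sin 2θ). -/
/-!
Write `λ₁ = 1 - (1 - α) A / (2D)` and `λ₂ = (1 - α) B / (2D)` with `D = (1 + P)(P + T)`,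
`A = 2P(1 + T)` and `B = 2D - T - P²`. Then `B λ₁ + A λ₂ = B` whatever `α` is, so
`max λ₁ λ₂ ≥ B / (A + B)`. With `s (1 + T) = 2 √T` one finds
`B (4 + s) - (A + B)(2 + s) = 2 (P - √T)²`, hence `B / (A + B) ≥ (2 + s) / (4 + s)`, with
equality at `P = √T`; there the choice `α = (2 - s) / (4 + s)` makes `λ₁ = λ₂`.
-/

open Real

namespace ZZVerification

noncomputable def lam₁ (T α P : ℝ) : ℝ := 1 - P * (1 - α) * (1 + T) / ((1 + P) * (P + T))

noncomputable def lam₂ (T α P : ℝ) : ℝ := (1 - α) * (1 - (T + P ^ 2) / (2 * (1 + P) * (P + T)))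

noncomputable def sinTwoTheta (T : ℝ) : ℝ := 2 * √T / (1 + T)

section

variable {T : ℝ}

lemma sinTwoTheta_mul_one_add (hT : 0 ≤ T) : sinTwoTheta T * (1 + T) = 2 * √T := by
  unfold sinTwoTheta
  field_simp

lemma sinTwoTheta_nonneg (hT : 0 ≤ T) : 0 ≤ sinTwoTheta T := by
  unfold sinTwoTheta
  positivity

lemma sinTwoTheta_le_one (hT : 0 ≤ T) : sinTwoTheta T ≤ 1 := by
  rw [sinTwoTheta, div_le_one (by linarith)]
  nlinarith [sq_nonneg (√T - 1), sq_sqrt hT]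

lemma sinTwoTheta_tan_sq {θ : ℝ} (hθ₀ : 0 ≤ θ) (hθ : θ < π / 2) :
    sinTwoTheta (tan θ ^ 2) = sin (2 * θ) := by
  rw [sinTwoTheta, sqrt_sq (tan_nonneg_of_nonneg_of_le_pi_div_two hθ₀ hθ.le),
    sin_eq_two_mul_tan_half_div_one_add_tan_half_sq, mul_div_cancel_left₀ θ two_ne_zero]

lemma weighted_sum_lam (hT : 0 < T) (α : ℝ) {P : ℝ} (hP : 0 < P) :
    (2 * (1 + P) * (P + T) - T - P ^ 2) * lam₁ T α P + 2 * P * (1 + T) * lam₂ T α P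
      = 2 * (1 + P) * (P + T) - T - P ^ 2 := by
  have : (1 + P) * (P + T) ≠ 0 := by positivity
  unfold lam₁ lam₂
  field_simp
  ring

lemma le_max_of_weighted_sum_eq {a b c x y : ℝ} (ha : 0 ≤ a) (hb : 0 ≤ b)
    (h : a * x + b * y = c) : c ≤ (a + b) * max x y := by
  rw [← h, add_mul]
  gcongr
  exacts [le_max_left x y, le_max_right x y]

lemma optimalValue_le_max_lam (hT : 0 < T) (α : ℝ) {P : ℝ} (hP : 0 < P) :
    (2 + sinTwoTheta T) / (4 + sinTwoTheta T) ≤ max (lam₁ T α P) (lam₂ T α P) := by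
  set s := sinTwoTheta T
  set A := 2 * P * (1 + T)
  set B := 2 * (1 + P) * (P + T) - T - P ^ 2
  have hs : s * (1 + T) = 2 * √T := sinTwoTheta_mul_one_add hT.le
  have hB : 0 < B := by nlinarith
  have hmax : B ≤ (B + A) * max (lam₁ T α P) (lam₂ T α P) :=
    le_max_of_weighted_sum_eq hB.le (by positivity) (weighted_sum_lam hT α hP)
  have hgap : B * (4 + s) - (B + A) * (2 + s) = 2 * (P - √T) ^ 2 := by
    linear_combination (-2 * P) * hs - 2 * sq_sqrt hT.le
  have h4s : 0 < 4 + s := by linarith [sinTwoTheta_nonneg hT.le]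
  rw [div_le_iff₀ h4s]
  refine le_of_mul_le_mul_left ?_ (by positivity : 0 < B + A)
  calc (B + A) * (2 + s) ≤ B * (4 + s) := by linarith [hgap, sq_nonneg (P - √T)]
    _ ≤ (B + A) * max (lam₁ T α P) (lam₂ T α P) * (4 + s) :=
      mul_le_mul_of_nonneg_right hmax h4s.le
    _ = (B + A) * (max (lam₁ T α P) (lam₂ T α P) * (4 + s)) := by ring

lemma optimalAlpha_mem_Icc (hT : 0 ≤ T) :
    (2 - sinTwoTheta T) / (4 + sinTwoTheta T) ∈ Set.Icc (0 : ℝ) 1 := by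
  have h₀ := sinTwoTheta_nonneg hT
  have h₁ := sinTwoTheta_le_one hT
  exact ⟨div_nonneg (by linarith) (by linarith), (div_le_one (by linarith)).mpr (by linarith)⟩

lemma lam₁_optimal (hT : 0 < T) :
    lam₁ T ((2 - sinTwoTheta T) / (4 + sinTwoTheta T)) √T
      = (2 + sinTwoTheta T) / (4 + sinTwoTheta T) := by
  have h4s : 0 < 4 + sinTwoTheta T := by linarith [sinTwoTheta_nonneg hT.le]
  have hs := sinTwoTheta_mul_one_add hT.le
  have hTr : T = √T ^ 2 := (sq_sqrt hT.le).symm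
  have hr : 0 < √T := sqrt_pos.mpr hT
  rw [lam₁]
  generalize sinTwoTheta T = s at *
  generalize √T = r at *
  subst hTr
  field_simp
  linear_combination -2 * hs

lemma lam₂_optimal (hT : 0 < T) :
    lam₂ T ((2 - sinTwoTheta T) / (4 + sinTwoTheta T)) √T
      = (2 + sinTwoTheta T) / (4 + sinTwoTheta T) := by
  have h4s : 0 < 4 + sinTwoTheta T := by linarith [sinTwoTheta_nonneg hT.le]
  have hs := sinTwoTheta_mul_one_add hT.le
  have hTr : T = √T ^ 2 := (sq_sqrt hT.le).symm
  have hr : 0 < √T := sqrt_pos.mpr hT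
  rw [lam₂]
  generalize sinTwoTheta T = s at *
  generalize √T = r at *
  subst hTr
  field_simp
  linear_combination 2 * hs

lemma max_lam_optimal (hT : 0 < T) :
    max (lam₁ T ((2 - sinTwoTheta T) / (4 + sinTwoTheta T)) √T)
      (lam₂ T ((2 - sinTwoTheta T) / (4 + sinTwoTheta T)) √T)
      = (2 + sinTwoTheta T) / (4 + sinTwoTheta T) := by
  rw [lam₁_optimal hT, lam₂_optimal hT, max_self]

end

end ZZVerification

theorem stmt_13 (T : ℝ) (hT : 0 < T) (s : ℝ) (hs : s = 2 * Real.sqrt T / (1 + T))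
    (lam₁ lam₂ : ℝ → ℝ → ℝ)
    (h1 : ∀ α P, lam₁ α P = 1 - P * (1 - α) * (1 + T) / ((1 + P) * (P + T)))
    (h2 : ∀ α P, lam₂ α P = (1 - α) * (1 - (T + P ^ 2) / (2 * (1 + P) * (P + T)))) :
    IsLeast {y : ℝ | ∃ α ∈ Set.Icc (0 : ℝ) 1, ∃ P ∈ Set.Ioi (0 : ℝ),
        y = max (lam₁ α P) (lam₂ α P)}
      ((2 + s) / (4 + s)) ∧
    max (lam₁ ((2 - s) / (4 + s)) (Real.sqrt T)) (lam₂ ((2 - s) / (4 + s)) (Real.sqrt T))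
      = (2 + s) / (4 + s) ∧
    ∀ θ ∈ Set.Ioo 0 (Real.pi / 2), T = Real.tan θ ^ 2 →
      (2 + s) / (4 + s) = (2 + Real.sin (2 * θ)) / (4 + Real.sin (2 * θ)) := by
  obtain rfl : s = ZZVerification.sinTwoTheta T := hs
  obtain rfl : lam₁ = ZZVerification.lam₁ T := funext₂ h1
  obtain rfl : lam₂ = ZZVerification.lam₂ T := funext₂ h2
  have hopt := ZZVerification.max_lam_optimal hT
  refine ⟨⟨⟨_, ZZVerification.optimalAlpha_mem_Icc hT.le, √T, sqrt_pos.mpr hT, hopt.symm⟩, ?_⟩,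
    hopt, ?_⟩
  · rintro y ⟨α, -, P, hP, rfl⟩
    exact ZZVerification.optimalValue_le_max_lam hT α hP
  · rintro θ ⟨hθ₀, hθ⟩ rfl
    rw [ZZVerification.sinTwoTheta_tan_sq hθ₀.le hθ]
end
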